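/- arXiv:2001.09635 — 3 statements merged into one kernel-verified Lean document; each statement's English description precedes it below -/
import Mathlib

section
/- Let p be a prime number and let A be the free associative (noncommutative) algebra over ℤ/pℤ on two generators X and Y. Then X^p·Y^p − (X·Y)^p does not lie in [A,A], the additive subgroup of A generated by all commutators ab − ba with a, b ∈ A. (In other words, X^p·Y^p ≢ (XY)^p modulo [A,A].) -/
/-!
An additive map `T` with `T (a * b) = T (b * a)` kills `[A,A]`. On the free algebra such a map is
obtained from any function of cyclic words, i.e. of monomials up to rotation. Take the indicator of
the cyclic word `X^p Y^p`: it is `1` on `X^p Y^p` and `0` on `(XY)^p`, because cyclically `(XY)^p`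
never repeats a letter while `X^p Y^p` does as soon as `p ≥ 2`.
-/

/-- The additive subgroup `[A,A]` of a ring `A` generated by all commutators `a*b - b*a`. -/
def commutatorAddSubgroup (A : Type*) [Ring A] : AddSubgroup A :=
  AddSubgroup.closure {x : A | ∃ a b : A, x = a * b - b * a}

open MonoidAlgebra

theorem commutatorAddSubgroup_le_ker {A B : Type*} [Ring A] [AddGroup B] (f : A →+ B)
    (hf : ∀ a b, f (a * b) = f (b * a)) : commutatorAddSubgroup A ≤ f.ker :=
  (AddSubgroup.closure_le _).2 <| by
    rintro _ ⟨a, b, rfl⟩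
    simp [hf]

theorem MonoidAlgebra.liftNC_id_mul_comm {R M : Type*} [CommSemiring R] [Mul M] {g : M → R}
    (hg : ∀ u v, g (u * v) = g (v * u)) (a b : R[M]) :
    liftNC (.id R) g (a * b) = liftNC (.id R) g (b * a) := by
  induction a using MonoidAlgebra.induction_linear with
  | zero => simp
  | add a a' ha ha' => simp only [add_mul, mul_add, map_add, ha, ha']
  | single u r =>
    induction b using MonoidAlgebra.induction_linear with
    | zero => simp
    | add b b' hb hb' => simp only [add_mul, mul_add, map_add, hb, hb']
    | single v s =>
      simp only [single_mul_single, liftNC_single, hg u v, AddMonoidHom.id_apply, mul_comm r s]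

theorem Cycle.coe_append_comm {α : Type*} (l₁ l₂ : List α) :
    ((l₁ ++ l₂ : List α) : Cycle α) = (l₂ ++ l₁ : List α) :=
  Cycle.coe_eq_coe.2 List.isRotated_append

namespace FreeAlgebra

variable (R : Type*) [CommSemiring R] {α : Type*}

noncomputable def cyclicTrace (f : Cycle α → R) : FreeAlgebra R α →+ R :=
  (liftNC (.id R) fun w : FreeMonoid α => f w.toList).comp
    (equivMonoidAlgebraFreeMonoid : FreeAlgebra R α ≃ₐ[R] R[FreeMonoid α]).toAddMonoidHom

theorem cyclicTrace_apply (f : Cycle α → R) (x : FreeAlgebra R α) :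
    cyclicTrace R f x =
      liftNC (.id R) (fun w : FreeMonoid α => f w.toList) (equivMonoidAlgebraFreeMonoid x) :=
  rfl

theorem cyclicTrace_mul_comm (f : Cycle α → R) (a b : FreeAlgebra R α) :
    cyclicTrace R f (a * b) = cyclicTrace R f (b * a) := by
  simp only [cyclicTrace_apply, map_mul]
  exact liftNC_id_mul_comm
    (fun u v => by simp only [FreeMonoid.toList_mul, Cycle.coe_append_comm]) _ _

theorem equivMonoidAlgebraFreeMonoid_lift_ι (w : FreeMonoid α) :
    equivMonoidAlgebraFreeMonoid (FreeMonoid.lift (ι R) w) = of R (FreeMonoid α) w :=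
  DFunLike.congr_fun (FreeMonoid.hom_eq (g := of R (FreeMonoid α))
    (f := (equivMonoidAlgebraFreeMonoid : FreeAlgebra R α ≃ₐ[R] R[FreeMonoid α]).toMonoidHom
      |>.comp (FreeMonoid.lift (ι R)))
    fun a => by simp [equivMonoidAlgebraFreeMonoid]) w

theorem cyclicTrace_lift_ι (f : Cycle α → R) (w : FreeMonoid α) :
    cyclicTrace R f (FreeMonoid.lift (ι R) w) = f w.toList := by
  simp [cyclicTrace_apply, equivMonoidAlgebraFreeMonoid_lift_ι]

end FreeAlgebra

theorem FreeMonoid.toList_of_pow {α : Type*} (a : α) (n : ℕ) :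
    (FreeMonoid.of a ^ n).toList = List.replicate n a := by
  induction n with
  | zero => rfl
  | succ n ih => rw [pow_succ, toList_mul, ih, toList_of, List.replicate_succ']

theorem Cycle.chain_ne_alternating {α : Type*} {a b : α} (hab : a ≠ b) (n : ℕ) :
    Cycle.Chain (· ≠ ·) (((FreeMonoid.of a * FreeMonoid.of b) ^ n).toList : Cycle α) := by
  have key : ∀ n, List.IsChain (· ≠ ·)
      (b :: (((FreeMonoid.of a * FreeMonoid.of b) ^ n).toList ++ [a])) := by
    intro n
    induction n with
    | zero => simpa using hab.symm
    | succ n ih => simpa [pow_succ', FreeMonoid.toList_mul, hab, hab.symm] using ih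
  cases n with
  | zero => simp
  | succ n => simpa [pow_succ', FreeMonoid.toList_mul, hab] using key n

theorem Cycle.not_chain_ne_cons_cons {α : Type*} (a : α) (l : List α) :
    ¬ Cycle.Chain (· ≠ ·) ((a :: a :: l : List α) : Cycle α) := by
  simp

theorem stmt_0 (p : ℕ) (hp : p.Prime)
    (X Y : FreeAlgebra (ZMod p) (Fin 2))
    (hX : X = FreeAlgebra.ι (ZMod p) 0) (hY : Y = FreeAlgebra.ι (ZMod p) 1) :
    X ^ p * Y ^ p - (X * Y) ^ p ∉ commutatorAddSubgroup (FreeAlgebra (ZMod p) (Fin 2)) := by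
  have : Fact p.Prime := ⟨hp⟩
  set c : Cycle (Fin 2) := ↑(List.replicate p 0 ++ List.replicate p 1 : List (Fin 2))
  set T := FreeAlgebra.cyclicTrace (ZMod p) fun d => if d = c then 1 else 0
  have hmonomial :
      X ^ p * Y ^ p = FreeMonoid.lift (FreeAlgebra.ι (ZMod p)) (.of 0 ^ p * .of 1 ^ p) := by
    simp [hX, hY]
  have hpow : (X * Y) ^ p = FreeMonoid.lift (FreeAlgebra.ι (ZMod p)) ((.of 0 * .of 1) ^ p) := by
    simp [hX, hY]
  have hc : (((FreeMonoid.of (0 : Fin 2) * .of 1) ^ p).toList : Cycle (Fin 2)) ≠ c := by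
    obtain ⟨k, rfl⟩ : ∃ k, p = k + 2 := ⟨p - 2, by have := hp.two_le; omega⟩
    intro h
    have := Cycle.chain_ne_alternating (a := (0 : Fin 2)) (b := 1) (by decide) (k + 2)
    rw [h] at this
    exact Cycle.not_chain_ne_cons_cons _ _ this
  intro hmem
  have hT := commutatorAddSubgroup_le_ker T (FreeAlgebra.cyclicTrace_mul_comm _ _) hmem
  rw [AddMonoidHom.mem_ker, map_sub, hmonomial, hpow, FreeAlgebra.cyclicTrace_lift_ι,
    FreeAlgebra.cyclicTrace_lift_ι] at hT
  simp [hc, FreeMonoid.toList_of_pow, c] at hT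
end

section
/- Let p be a prime number and let A be the free associative (noncommutative) ring ℤ{X,Y} on two generators X and Y over ℤ. Then X^p·Y^p − (X·Y)^p does not lie in the additive subgroup pA + [A,A] of A generated by all elements pa with a ∈ A together with all commutators ab − ba with a, b ∈ A. -/
/-- The additive subgroup `p·A + [A,A]` of a ring `A` generated by all `p • a` together
with all commutators `a*b - b*a`. -/
def pCommutatorAddSubgroup (p : ℕ) (A : Type*) [Ring A] : AddSubgroup A :=
  AddSubgroup.closure ({x : A | ∃ a : A, x = p • a} ∪ {x : A | ∃ a b : A, x = a * b - b * a})

/-!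
Any additive map `φ` with `φ (a * b) = φ (b * a)` and `p • φ = 0` kills `p·A + [A,A]`; the trace
of a matrix representation over `ZMod p` is such a map. Sending `X ↦ E₁₂` and `Y ↦ E₂₁`, the
nilpotent `E₁₂` gives `X ^ p * Y ^ p ↦ 0`, while `X * Y ↦ E₁₁` is idempotent, so
`(X * Y) ^ p ↦ E₁₁`. The element therefore has trace `-1 ≠ 0`.
-/

open Matrix

theorem pCommutatorAddSubgroup_le_ker {p : ℕ} {A M : Type*} [Ring A] [AddCommGroup M]
    (φ : A →+ M) (hp : ∀ a, p • φ a = 0) (hcomm : ∀ a b, φ (a * b) = φ (b * a)) :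
    pCommutatorAddSubgroup p A ≤ φ.ker := by
  refine (AddSubgroup.closure_le _).mpr ?_
  rintro _ (⟨a, rfl⟩ | ⟨a, b, rfl⟩)
  · rw [SetLike.mem_coe, AddMonoidHom.mem_ker, map_nsmul, hp]
  · simp [hcomm]

theorem pCommutatorAddSubgroup_le_ker_trace_comp {p : ℕ} {A n R : Type*} [Ring A] [Fintype n]
    [DecidableEq n] [CommRing R] (hp : (p : R) = 0) (f : A →+* Matrix n n R) :
    pCommutatorAddSubgroup p A ≤ ((traceAddMonoidHom n R).comp f.toAddMonoidHom).ker :=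
  pCommutatorAddSubgroup_le_ker _ (fun a => by simp [nsmul_eq_mul, hp])
    (fun a b => by simpa using trace_mul_comm (f a) (f b))

theorem single_pow_eq_zero_of_ne {n R : Type*} [Fintype n] [DecidableEq n] [Semiring R]
    {i j : n} (h : i ≠ j) (c : R) {k : ℕ} (hk : 2 ≤ k) : single i j c ^ k = 0 := by
  obtain ⟨m, rfl⟩ := Nat.exists_eq_add_of_le' hk
  rw [pow_add, sq, single_mul_single_of_ne (h := h.symm), mul_zero]

theorem isIdempotentElem_single_one {n R : Type*} [Fintype n] [DecidableEq n] [Semiring R]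
    (i : n) : IsIdempotentElem (single i i (1 : R)) := by
  simp [IsIdempotentElem]

theorem stmt_1 (p : ℕ) (hp : p.Prime)
    (X Y : FreeAlgebra ℤ (Fin 2))
    (hX : X = FreeAlgebra.ι ℤ 0) (hY : Y = FreeAlgebra.ι ℤ 1) :
    X ^ p * Y ^ p - (X * Y) ^ p ∉ pCommutatorAddSubgroup p (FreeAlgebra ℤ (Fin 2)) := by
  have : Fact p.Prime := ⟨hp⟩
  let f : FreeAlgebra ℤ (Fin 2) →ₐ[ℤ] Matrix (Fin 2) (Fin 2) (ZMod p) :=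
    FreeAlgebra.lift ℤ ![single 0 1 1, single 1 0 1]
  have hf : f (X ^ p * Y ^ p - (X * Y) ^ p) = -single 0 0 1 := by
    simp [f, hX, hY, single_pow_eq_zero_of_ne, hp.two_le,
      (isIdempotentElem_single_one (R := ZMod p) (0 : Fin 2)).pow_eq hp.ne_zero]
  intro hmem
  have h := pCommutatorAddSubgroup_le_ker_trace_comp (ZMod.natCast_self p) f.toRingHom hmem
  simp [hf] at h
end

section
/- Let p be a prime number and let A be the free associative (noncommutative) ring ℤ{X,Y} on two generators X and Y over ℤ. Then there is no element α ∈ A such that α − XY ∈ [A,A] and α^p − X^p·Y^p ∈ pA + [A,A]. (This is the ghost-component obstruction underlying the nonexistence of a continuous surjective group homomorphism W(A) → HH₀(E(A)) compatible with the Verschiebung and the Teichmüller map.) -/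
/-!
Map `ℤ{X,Y}` to `M₂(𝔽_p)` by `X ↦ E₁₂`, `Y ↦ E₂₁` and take traces. The trace of a matrix
representation kills `[A,A]`, and over `𝔽_p` also `pA`; moreover `tr (M^p) = (tr M)^p` over `𝔽_p`.
So `α` would satisfy `tr α = tr (E₁₂E₂₁) = 1` and `(tr α)^p = tr (E₁₂^p E₂₁^p) = 0`,
as `E₁₂² = 0`.
-/

section TraceOfRepresentation

variable {A R n : Type*} [Ring A] [CommRing R] [Fintype n] [DecidableEq n]

def traceComp (f : A →+* Matrix n n R) : A →+ R :=
  (Matrix.traceAddMonoidHom n R).comp f.toAddMonoidHom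

@[simp]
theorem traceComp_apply (f : A →+* Matrix n n R) (a : A) : traceComp f a = (f a).trace := rfl

theorem commutator_mem_ker_traceComp (f : A →+* Matrix n n R) (a b : A) :
    a * b - b * a ∈ (traceComp f).ker := by
  rw [AddMonoidHom.mem_ker, traceComp_apply, map_sub, map_mul, map_mul, Matrix.trace_sub,
    Matrix.trace_mul_comm, sub_self]

theorem commutatorAddSubgroup_le_ker_traceComp (f : A →+* Matrix n n R) :
    commutatorAddSubgroup A ≤ (traceComp f).ker := by
  rw [commutatorAddSubgroup, AddSubgroup.closure_le]
  rintro _ ⟨a, b, rfl⟩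
  exact commutator_mem_ker_traceComp f a b

theorem pCommutatorAddSubgroup_le_ker_traceComp (p : ℕ) [CharP R p]
    (f : A →+* Matrix n n R) : pCommutatorAddSubgroup p A ≤ (traceComp f).ker := by
  rw [pCommutatorAddSubgroup, AddSubgroup.closure_le, Set.union_subset_iff]
  constructor
  · rintro _ ⟨a, rfl⟩
    rw [SetLike.mem_coe, AddMonoidHom.mem_ker, map_nsmul, nsmul_eq_mul, CharP.cast_eq_zero,
      zero_mul]
  · rintro _ ⟨a, b, rfl⟩
    exact commutator_mem_ker_traceComp f a b

theorem trace_pow_eq_of_sub_mem {p : ℕ} [Fact p.Prime] (f : A →+* Matrix n n (ZMod p))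
    {α a b : A} (ha : α - a ∈ commutatorAddSubgroup A)
    (hb : α ^ p - b ∈ pCommutatorAddSubgroup p A) :
    (f a).trace ^ p = (f b).trace := by
  have hαa := commutatorAddSubgroup_le_ker_traceComp f ha
  have hαb := pCommutatorAddSubgroup_le_ker_traceComp p f hb
  rw [AddMonoidHom.mem_ker, map_sub, sub_eq_zero, traceComp_apply, traceComp_apply] at hαa hαb
  rw [← hαa, ← hαb, map_pow, ZMod.trace_pow_card]

end TraceOfRepresentation

theorem stmt_10 (p : ℕ) (hp : p.Prime)
    (X Y : FreeAlgebra ℤ (Fin 2))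
    (hX : X = FreeAlgebra.ι ℤ 0) (hY : Y = FreeAlgebra.ι ℤ 1) :
    ¬ ∃ α : FreeAlgebra ℤ (Fin 2),
        α - X * Y ∈ commutatorAddSubgroup (FreeAlgebra ℤ (Fin 2)) ∧
        α ^ p - X ^ p * Y ^ p ∈ pCommutatorAddSubgroup p (FreeAlgebra ℤ (Fin 2)) := by
  have : Fact p.Prime := ⟨hp⟩
  rintro ⟨α, hα, hαp⟩
  let ρ : FreeAlgebra ℤ (Fin 2) →ₐ[ℤ] Matrix (Fin 2) (Fin 2) (ZMod p) :=
    FreeAlgebra.lift ℤ ![Matrix.single 0 1 1, Matrix.single 1 0 1]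
  have hρX : ρ X = Matrix.single 0 1 1 := by simp [ρ, hX]
  have hρY : ρ Y = Matrix.single 1 0 1 := by simp [ρ, hY]
  have hρX_sq : ρ X ^ 2 = 0 := by simp [hρX, sq]
  have htr_XY : (ρ (X * Y)).trace = 1 := by
    rw [map_mul, hρX, hρY, Matrix.single_mul_single_same, mul_one, Matrix.trace_single_eq_same]
  have htr_XpYp : (ρ (X ^ p * Y ^ p)).trace = 0 := by
    rw [map_mul, map_pow, pow_eq_zero_of_le hp.two_le hρX_sq, zero_mul, Matrix.trace_zero]
  have h := trace_pow_eq_of_sub_mem ρ.toRingHom hα hαp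
  rw [AlgHom.toRingHom_eq_coe, RingHom.coe_coe, htr_XY, htr_XpYp, one_pow] at h
  exact one_ne_zero h
end
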